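/- The expectation value of M_{N−k} ⊗ 1_k on the permutation-invariant state |PI_N⟩ = ∑ᵢ cᵢ|D_N^i⟩ equals 2^(N−k) · ∑_{s=0}^k C(k,s)·C(N,s)^(−1/2)·C(N,k−s)^(−1/2)·c_s·c_{N−k+s}, where M_{N−k} = 2^(N−k−1)(|D^0_{N−k}⟩⟨D^{N−k}_{N−k}| + h.c.) and |D^i_n⟩ are Dicke states. -/

import Mathlib

/-- Number of excitations (ones) of a computational basis state of n qubits. -/
def weight {n : ℕ} (x : Fin n → Fin 2) : ℕ :=
  (Finset.univ.filter (fun i => x i = 1)).card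

/-- The Dicke state |D_n^i⟩ = C(n,i)^(−1/2) ∑_{|x|=i} |x⟩, as a wavefunction. -/
noncomputable def dicke (n i : ℕ) : (Fin n → Fin 2) → ℂ :=
  fun x => if weight x = i then ((Real.sqrt (Nat.choose n i))⁻¹ : ℝ) else 0

/-- The permutation-invariant state |PI_N⟩ = ∑ᵢ cᵢ |D_N^i⟩ with real coefficients. -/
noncomputable def piState (N : ℕ) (c : ℕ → ℝ) : (Fin N → Fin 2) → ℂ :=
  fun x => ∑ i ∈ Finset.range (N + 1), (c i : ℂ) * dicke N i x

/-- The operator M_{N−k} ⊗ 1_k, where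
M_{N−k} = 2^(N−k−1)(|D^0⟩⟨D^{N−k}| + |D^{N−k}⟩⟨D^0|) acts on the first N−k qubits
(note |D^0⟩ and |D^{N−k}⟩ are the all-zeros and all-ones basis states). -/
noncomputable def merminBlock (N k : ℕ) :
    Matrix (Fin N → Fin 2) (Fin N → Fin 2) ℂ :=
  fun x y =>
    (2 : ℂ) ^ (N - k - 1) *
      (if ((∀ i : Fin N, (i : ℕ) < N - k → x i = 0) ∧
            (∀ i : Fin N, (i : ℕ) < N - k → y i = 1)) ∨
          ((∀ i : Fin N, (i : ℕ) < N - k → x i = 1) ∧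
            (∀ i : Fin N, (i : ℕ) < N - k → y i = 0)) then 1 else 0) *
      (if ∀ i : Fin N, N - k ≤ (i : ℕ) → x i = y i then 1 else 0)

/-
Split the qubits into the first `m = N - k` and the last `k`. On `Fin.append a t` the operator
acts as `2^(m-1) (|0…0⟩⟨1…1| + |1…1⟩⟨0…0|)` on the head `a` and as the identity on the tail `t`,
so for real amplitudes `ψ` the expectation is `2^m ∑_t ψ(0…0 t) ψ(1…1 t)`. The amplitude of
`|PI_N⟩` at `x` is `c_|x| / √C(N,|x|)`, a function of the weight `|x|` only; the two heads add
`0` and `m` to the weight, there are `C(k,s)` tails of weight `s`, and `C(N, m + s) = C(N, k - s)`.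
-/open Finset

theorem weight_le {n : ℕ} (x : Fin n → Fin 2) : weight x ≤ n :=
  (card_filter_le _ _).trans_eq (card_fin n)

theorem weight_append {m n : ℕ} (a : Fin m → Fin 2) (t : Fin n → Fin 2) :
    weight (Fin.append a t) = weight a + weight t := by
  simp only [weight, card_filter, Fin.sum_univ_add, Fin.append_left, Fin.append_right]

@[simp] theorem weight_zero (n : ℕ) : weight (0 : Fin n → Fin 2) = 0 := by
  simp [weight]

@[simp] theorem weight_one (n : ℕ) : weight (1 : Fin n → Fin 2) = n := by
  simp [weight]

theorem card_filter_weight_eq (n s : ℕ) :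
    #{t : Fin n → Fin 2 | weight t = s} = n.choose s := by
  conv_rhs => rw [← Fintype.card_fin n, ← card_univ, ← card_powersetCard]
  refine card_nbij' (fun t => ({j | t j = 1} : Finset (Fin n))) (fun S j => if j ∈ S then 1 else 0)
    ?_ ?_ ?_ ?_
  · intro t ht
    rw [mem_coe, mem_filter] at ht
    simpa [weight] using ht
  · intro S hS
    rw [mem_coe, mem_filter]
    simpa [weight, apply_ite] using hS
  · intro t _
    funext j
    rcases Fin.exists_fin_two.mp ⟨t j, rfl⟩ with h | h <;> simp [h]
  · intro S _
    ext j
    by_cases hj : j ∈ S <;> simp [hj]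

theorem sum_comp_weight {M : Type*} [AddCommMonoid M] (n : ℕ) (g : ℕ → M) :
    ∑ t : Fin n → Fin 2, g (weight t) = ∑ s ∈ range (n + 1), n.choose s • g s := by
  rw [← sum_fiberwise_of_maps_to (g := weight) (t := range (n + 1))
    (fun t _ => mem_range_succ_iff.mpr (weight_le t))]
  refine sum_congr rfl fun s _ => ?_
  rw [sum_congr rfl fun t ht => congrArg g (mem_filter.mp ht).2, sum_const,
    card_filter_weight_eq]

theorem piState_apply (N : ℕ) (c : ℕ → ℝ) (x : Fin N → Fin 2) :
    piState N c x = ((c (weight x) / √(N.choose (weight x)) : ℝ) : ℂ) := by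
  simp [piState, dicke, mul_ite, Nat.lt_succ_of_le (weight_le x), div_eq_mul_inv]

theorem forall_lt_imp_append_eq_iff {α : Type*} {m n : ℕ} (a : Fin m → α) (t : Fin n → α)
    (v : α) :
    (∀ i : Fin (m + n), (i : ℕ) < m → Fin.append a t i = v) ↔ a = Function.const _ v := by
  simp [Fin.forall_fin_add, funext_iff]

theorem forall_le_imp_append_eq_append_iff {α : Type*} {m n : ℕ} (a b : Fin m → α)
    (t u : Fin n → α) :
    (∀ i : Fin (m + n), m ≤ (i : ℕ) → Fin.append a t i = Fin.append b u i) ↔ t = u := by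
  simp [Fin.forall_fin_add, funext_iff]

theorem Fintype.sum_fin_append {α M : Type*} [Fintype α] [AddCommMonoid M] {m n : ℕ}
    (f : (Fin (m + n) → α) → M) : ∑ x, f x = ∑ a, ∑ t, f (Fin.append a t) := by
  rw [← (Fin.appendEquiv m n).sum_comp, Fintype.sum_prod_type]
  rfl

theorem merminBlock_append {m k : ℕ} (hm : 0 < m) (a b : Fin m → Fin 2) (t u : Fin k → Fin 2) :
    merminBlock (m + k) k (Fin.append a t) (Fin.append b u) =
      2 ^ (m - 1) * ((if a = 0 ∧ b = 1 then 1 else 0) + (if a = 1 ∧ b = 0 then 1 else 0)) *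
        (if t = u then 1 else 0) := by
  have h01 : (0 : Fin m → Fin 2) ≠ 1 := fun h => by simpa using congrFun h ⟨0, hm⟩
  rw [merminBlock, Nat.add_sub_cancel]
  simp only [forall_lt_imp_append_eq_iff, forall_le_imp_append_eq_append_iff, Function.const_zero,
    Function.const_one]
  congr 2
  split_ifs <;> simp_all

theorem sum_conj_mul_merminBlock_mul {m k : ℕ} (hm : 0 < m) (ψ : (Fin (m + k) → Fin 2) → ℂ) :
    ∑ x, ∑ y, starRingEnd ℂ (ψ x) * merminBlock (m + k) k x y * ψ y =
      2 ^ (m - 1) * ∑ t, (starRingEnd ℂ (ψ (Fin.append 0 t)) * ψ (Fin.append 1 t) +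
        starRingEnd ℂ (ψ (Fin.append 1 t)) * ψ (Fin.append 0 t)) := by
  simp only [Fintype.sum_fin_append (fun x => ∑ y, _), Fintype.sum_fin_append (fun y => _ * ψ y),
    merminBlock_append hm]
  simp only [ite_and, mul_add, mul_ite, mul_one, mul_zero, ite_mul, add_mul, zero_mul, sum_ite_eq,
    mem_univ, ↓reduceIte, sum_add_distrib, sum_ite_irrel, sum_ite_eq', sum_const_zero, mul_sum]
  congr 1 <;> exact sum_congr rfl fun _ _ => by ring

theorem stmt19_general (N k : ℕ) (h : k < N) (c : ℕ → ℝ) :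
    (∑ x : Fin N → Fin 2, ∑ y : Fin N → Fin 2,
        (starRingEnd ℂ) (piState N c x) * merminBlock N k x y * piState N c y) =
      ((∑ s ∈ Finset.range (k + 1),
          2 ^ (N - k) * (Nat.choose k s : ℝ) /
            Real.sqrt ((Nat.choose N s : ℝ) * (Nat.choose N (k - s) : ℝ)) *
            c s * c (N - k + s) : ℝ) : ℂ) := by
  obtain ⟨m, rfl⟩ := Nat.exists_eq_add_of_le' h.le
  have hm : 0 < m := by omega
  rw [sum_conj_mul_merminBlock_mul hm]
  simp only [piState_apply, weight_append, weight_zero, weight_one, zero_add, Complex.conj_ofReal,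
    Nat.add_sub_cancel]
  norm_cast
  rw [sum_comp_weight k fun s =>
    c s / √((m + k).choose s) * (c (m + s) / √((m + k).choose (m + s))) +
      c (m + s) / √((m + k).choose (m + s)) * (c s / √((m + k).choose s)), mul_sum]
  refine sum_congr rfl fun s hs => ?_
  have hsk : s ≤ k := mem_range_succ_iff.mp hs
  push_cast
  rw [Nat.choose_symm_of_eq_add (show m + k = m + s + (k - s) by omega),
    Real.sqrt_mul (by positivity), nsmul_eq_mul, ← pow_sub_one_mul hm.ne']
  field_simp
  ring

theorem stmt19 (N k : ℕ) (h : k < N) (c : ℕ → ℝ)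
    (hnorm : ∑ i ∈ Finset.range (N + 1), (c i) ^ 2 = 1) :
    (∑ x : Fin N → Fin 2, ∑ y : Fin N → Fin 2,
        (starRingEnd ℂ) (piState N c x) * merminBlock N k x y * piState N c y) =
      ((∑ s ∈ Finset.range (k + 1),
          2 ^ (N - k) * (Nat.choose k s : ℝ) /
            Real.sqrt ((Nat.choose N s : ℝ) * (Nat.choose N (k - s) : ℝ)) *
            c s * c (N - k + s) : ℝ) : ℂ) :=
  stmt19_general N k h c
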